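/- Let (A,↖,↑,↗) be a partially dendriform 3-algebra over a field k and write ∗ := ↖ + ↑ + ↗. Define {x,y,z} := ∗(x,y,z) − ∗(x,z,y). Then: (1) (A,{·,·,·}) is a generalized pre-Lie algebra of order 3; and (2) the cyclic sum {x,y,z} + {y,z,x} + {z,x,y} equals the full commutator ∑_{σ ∈ S3} sgn(σ) ∗(x_{σ(1)},x_{σ(2)},x_{σ(3)}) of the operation ∗, so the diagram relating partially dendriform 3-algebras, partially associative 3-algebras, generalized pre-Lie algebras of order 3 and generalized Lie algebras of order 3 commutes. -/
import Mathlib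


/-- The sum of three ternary operations. -/
def star3 {A : Type*} [AddCommGroup A] (f g h : A → A → A → A) : A → A → A → A :=
  fun x y z => f x y z + g x y z + h x y z

/-- The cyclic sum `○{x,y,z} = {x,y,z} + {y,z,x} + {z,x,y}` of a ternary operation. -/
def cyc3 {A : Type*} [AddCommGroup A] (f : A → A → A → A) : A → A → A → A :=
  fun x y z => f x y z + f y z x + f z x y

/-- The full (signed) commutator `∑_{σ ∈ S₃} sgn(σ) f(x_{σ(1)}, x_{σ(2)}, x_{σ(3)})`
of a ternary operation. -/
def comm3 {A : Type*} [AddCommGroup A] (f : A → A → A → A) : A → A → A → A :=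
  fun x y z =>
    ∑ σ : Equiv.Perm (Fin 3),
      (Equiv.Perm.sign σ : ℤ) • f (![x, y, z] (σ 0)) (![x, y, z] (σ 1)) (![x, y, z] (σ 2))

/-- The defining relations of a partially dendriform 3-algebra with operations
`↖ = nw`, `↑ = up`, `↗ = ne`. -/
def PartDend3 {A : Type*} [AddCommGroup A] (nw up ne : A → A → A → A) : Prop :=
  (∀ x1 x2 x3 x4 x5 : A,
    nw (nw x1 x2 x3) x4 x5 + nw x1 (star3 nw up ne x2 x3 x4) x5
      + nw x1 x2 (star3 nw up ne x3 x4 x5) = 0) ∧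
  (∀ x1 x2 x3 x4 x5 : A,
    nw (up x1 x2 x3) x4 x5 + up x1 (nw x2 x3 x4) x5
      + up x1 x2 (star3 nw up ne x3 x4 x5) = 0) ∧
  (∀ x1 x2 x3 x4 x5 : A,
    nw (ne x1 x2 x3) x4 x5 + up x1 (up x2 x3 x4) x5
      + ne x1 x2 (nw x3 x4 x5) = 0) ∧
  (∀ x1 x2 x3 x4 x5 : A,
    up (star3 nw up ne x1 x2 x3) x4 x5 + up x1 (ne x2 x3 x4) x5
      + ne x1 x2 (up x3 x4 x5) = 0) ∧
  (∀ x1 x2 x3 x4 x5 : A,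
    ne (star3 nw up ne x1 x2 x3) x4 x5 + ne x1 (star3 nw up ne x2 x3 x4) x5
      + ne x1 x2 (ne x3 x4 x5) = 0)

/-- The defining relations of a generalized pre-Lie algebra of order 3. -/
def GenPreLie3 {A : Type*} [AddCommGroup A] (f : A → A → A → A) : Prop :=
  (∀ x1 x2 x3 : A, f x1 x2 x3 = - f x1 x3 x2) ∧
  (∀ x1 x2 x3 x4 x5 : A,
    f (f x1 x2 x3) x4 x5 =
      f (f x1 x2 x4) x3 x5 - f (f x1 x2 x5) x3 x4 - f (f x1 x3 x4) x2 x5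
        + f (f x1 x3 x5) x2 x4 - f (f x1 x4 x5) x2 x3 - f x1 (cyc3 f x2 x3 x4) x5
        + f x1 (cyc3 f x2 x3 x5) x4 - f x1 (cyc3 f x2 x4 x5) x3
        + f x1 (cyc3 f x3 x4 x5) x2)


private lemma sum_perm_fin3_aux {A : Type*} [AddCommGroup A] (s : A → A → A → A) (x y z : A) :
    (∑ σ : Equiv.Perm (Fin 3),
      (Equiv.Perm.sign σ : ℤ) • s (![x, y, z] (σ 0)) (![x, y, z] (σ 1)) (![x, y, z] (σ 2)))
    = s x y z - s x z y + s y z x - s y x z + s z x y - s z y x := by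
  rw [show (Finset.univ : Finset (Equiv.Perm (Fin 3))) =
    {1, Equiv.swap 0 1, Equiv.swap 0 2, Equiv.swap 1 2,
     Equiv.swap 0 1 * Equiv.swap 1 2, Equiv.swap 1 2 * Equiv.swap 0 1} from by decide]
  repeat rw [Finset.sum_insert (by decide)]
  rw [Finset.sum_singleton]
  norm_num (config := { decide := true }) [Equiv.swap_apply_def, Equiv.Perm.sign_swap,
    Equiv.Perm.sign_mul, Matrix.cons_val_zero, Matrix.cons_val_one, Matrix.head_cons,
    Matrix.cons_val_two, Matrix.tail_cons]
  abel

set_option maxHeartbeats 4000000 in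
/-- Let `(A, ↖, ↑, ↗)` be a partially dendriform 3-algebra over a field `k`,
`∗ := ↖ + ↑ + ↗` and `{x,y,z} := ∗(x,y,z) − ∗(x,z,y)`. Then (1) `(A, {·,·,·})` is a
generalized pre-Lie algebra of order 3, and (2) the cyclic sum
`{x,y,z} + {y,z,x} + {z,x,y}` equals the full signed commutator of `∗`. -/
theorem partDend3_bracket_genPreLie3_and_commutator
    {k A : Type*} [Field k] [AddCommGroup A] [Module k A]
    (nw up ne : A →ₗ[k] A →ₗ[k] A →ₗ[k] A)
    (h : PartDend3 (fun x y z => nw x y z) (fun x y z => up x y z) (fun x y z => ne x y z)) :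
    GenPreLie3 (fun x y z =>
      star3 (fun x y z => nw x y z) (fun x y z => up x y z) (fun x y z => ne x y z) x y z
        - star3 (fun x y z => nw x y z) (fun x y z => up x y z) (fun x y z => ne x y z)
            x z y) ∧
    (∀ x y z : A,
      cyc3 (fun x y z =>
        star3 (fun x y z => nw x y z) (fun x y z => up x y z) (fun x y z => ne x y z) x y z
          - star3 (fun x y z => nw x y z) (fun x y z => up x y z) (fun x y z => ne x y z)
              x z y) x y z =
        comm3 (star3 (fun x y z => nw x y z) (fun x y z => up x y z)
          (fun x y z => ne x y z)) x y z) := by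
  obtain ⟨h1, h2, h3, h4, h5⟩ := h
  have H1 : ∀ a b c d e : A, nw (nw a b c) d e
      + nw a (nw b c d + up b c d + ne b c d) e
      + nw a b (nw c d e + up c d e + ne c d e) = 0 := fun a b c d e => h1 a b c d e
  have H2 : ∀ a b c d e : A, nw (up a b c) d e + up a (nw b c d) e
      + up a b (nw c d e + up c d e + ne c d e) = 0 := fun a b c d e => h2 a b c d e
  have H3 : ∀ a b c d e : A, nw (ne a b c) d e + up a (up b c d) e
      + ne a b (nw c d e) = 0 := fun a b c d e => h3 a b c d e
  have H4 : ∀ a b c d e : A, up (nw a b c + up a b c + ne a b c) d e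
      + up a (ne b c d) e + ne a b (up c d e) = 0 := fun a b c d e => h4 a b c d e
  have H5 : ∀ a b c d e : A, ne (nw a b c + up a b c + ne a b c) d e
      + ne a (nw b c d + up b c d + ne b c d) e
      + ne a b (ne c d e) = 0 := fun a b c d e => h5 a b c d e
  refine ⟨⟨?_, ?_⟩, ?_⟩
  · intro x1 x2 x3
    simp only [star3]
    abel
  · intro x1 x2 x3 x4 x5
    have comb : (
  (nw (nw x1 x2 x3) x4 x5 + nw x1 (nw x2 x3 x4 + up x2 x3 x4 + ne x2 x3 x4) x5 + nw x1 x2 (nw x3 x4 x5 + up x3 x4 x5 + ne x3 x4 x5))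
  -(nw (nw x1 x2 x3) x5 x4 + nw x1 (nw x2 x3 x5 + up x2 x3 x5 + ne x2 x3 x5) x4 + nw x1 x2 (nw x3 x5 x4 + up x3 x5 x4 + ne x3 x5 x4))
  -(nw (nw x1 x2 x4) x3 x5 + nw x1 (nw x2 x4 x3 + up x2 x4 x3 + ne x2 x4 x3) x5 + nw x1 x2 (nw x4 x3 x5 + up x4 x3 x5 + ne x4 x3 x5))
  + (nw (nw x1 x2 x4) x5 x3 + nw x1 (nw x2 x4 x5 + up x2 x4 x5 + ne x2 x4 x5) x3 + nw x1 x2 (nw x4 x5 x3 + up x4 x5 x3 + ne x4 x5 x3))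
  + (nw (nw x1 x2 x5) x3 x4 + nw x1 (nw x2 x5 x3 + up x2 x5 x3 + ne x2 x5 x3) x4 + nw x1 x2 (nw x5 x3 x4 + up x5 x3 x4 + ne x5 x3 x4))
  -(nw (nw x1 x2 x5) x4 x3 + nw x1 (nw x2 x5 x4 + up x2 x5 x4 + ne x2 x5 x4) x3 + nw x1 x2 (nw x5 x4 x3 + up x5 x4 x3 + ne x5 x4 x3))
  -(nw (nw x1 x3 x2) x4 x5 + nw x1 (nw x3 x2 x4 + up x3 x2 x4 + ne x3 x2 x4) x5 + nw x1 x3 (nw x2 x4 x5 + up x2 x4 x5 + ne x2 x4 x5))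
  + (nw (nw x1 x3 x2) x5 x4 + nw x1 (nw x3 x2 x5 + up x3 x2 x5 + ne x3 x2 x5) x4 + nw x1 x3 (nw x2 x5 x4 + up x2 x5 x4 + ne x2 x5 x4))
  + (nw (nw x1 x3 x4) x2 x5 + nw x1 (nw x3 x4 x2 + up x3 x4 x2 + ne x3 x4 x2) x5 + nw x1 x3 (nw x4 x2 x5 + up x4 x2 x5 + ne x4 x2 x5))
  -(nw (nw x1 x3 x4) x5 x2 + nw x1 (nw x3 x4 x5 + up x3 x4 x5 + ne x3 x4 x5) x2 + nw x1 x3 (nw x4 x5 x2 + up x4 x5 x2 + ne x4 x5 x2))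
  -(nw (nw x1 x3 x5) x2 x4 + nw x1 (nw x3 x5 x2 + up x3 x5 x2 + ne x3 x5 x2) x4 + nw x1 x3 (nw x5 x2 x4 + up x5 x2 x4 + ne x5 x2 x4))
  + (nw (nw x1 x3 x5) x4 x2 + nw x1 (nw x3 x5 x4 + up x3 x5 x4 + ne x3 x5 x4) x2 + nw x1 x3 (nw x5 x4 x2 + up x5 x4 x2 + ne x5 x4 x2))
  + (nw (nw x1 x4 x2) x3 x5 + nw x1 (nw x4 x2 x3 + up x4 x2 x3 + ne x4 x2 x3) x5 + nw x1 x4 (nw x2 x3 x5 + up x2 x3 x5 + ne x2 x3 x5))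
  -(nw (nw x1 x4 x2) x5 x3 + nw x1 (nw x4 x2 x5 + up x4 x2 x5 + ne x4 x2 x5) x3 + nw x1 x4 (nw x2 x5 x3 + up x2 x5 x3 + ne x2 x5 x3))
  -(nw (nw x1 x4 x3) x2 x5 + nw x1 (nw x4 x3 x2 + up x4 x3 x2 + ne x4 x3 x2) x5 + nw x1 x4 (nw x3 x2 x5 + up x3 x2 x5 + ne x3 x2 x5))
  + (nw (nw x1 x4 x3) x5 x2 + nw x1 (nw x4 x3 x5 + up x4 x3 x5 + ne x4 x3 x5) x2 + nw x1 x4 (nw x3 x5 x2 + up x3 x5 x2 + ne x3 x5 x2))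
  + (nw (nw x1 x4 x5) x2 x3 + nw x1 (nw x4 x5 x2 + up x4 x5 x2 + ne x4 x5 x2) x3 + nw x1 x4 (nw x5 x2 x3 + up x5 x2 x3 + ne x5 x2 x3))
  -(nw (nw x1 x4 x5) x3 x2 + nw x1 (nw x4 x5 x3 + up x4 x5 x3 + ne x4 x5 x3) x2 + nw x1 x4 (nw x5 x3 x2 + up x5 x3 x2 + ne x5 x3 x2))
  -(nw (nw x1 x5 x2) x3 x4 + nw x1 (nw x5 x2 x3 + up x5 x2 x3 + ne x5 x2 x3) x4 + nw x1 x5 (nw x2 x3 x4 + up x2 x3 x4 + ne x2 x3 x4))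
  + (nw (nw x1 x5 x2) x4 x3 + nw x1 (nw x5 x2 x4 + up x5 x2 x4 + ne x5 x2 x4) x3 + nw x1 x5 (nw x2 x4 x3 + up x2 x4 x3 + ne x2 x4 x3))
  + (nw (nw x1 x5 x3) x2 x4 + nw x1 (nw x5 x3 x2 + up x5 x3 x2 + ne x5 x3 x2) x4 + nw x1 x5 (nw x3 x2 x4 + up x3 x2 x4 + ne x3 x2 x4))
  -(nw (nw x1 x5 x3) x4 x2 + nw x1 (nw x5 x3 x4 + up x5 x3 x4 + ne x5 x3 x4) x2 + nw x1 x5 (nw x3 x4 x2 + up x3 x4 x2 + ne x3 x4 x2))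
  -(nw (nw x1 x5 x4) x2 x3 + nw x1 (nw x5 x4 x2 + up x5 x4 x2 + ne x5 x4 x2) x3 + nw x1 x5 (nw x4 x2 x3 + up x4 x2 x3 + ne x4 x2 x3))
  + (nw (nw x1 x5 x4) x3 x2 + nw x1 (nw x5 x4 x3 + up x5 x4 x3 + ne x5 x4 x3) x2 + nw x1 x5 (nw x4 x3 x2 + up x4 x3 x2 + ne x4 x3 x2))
  + (nw (up x1 x2 x3) x4 x5 + up x1 (nw x2 x3 x4) x5 + up x1 x2 (nw x3 x4 x5 + up x3 x4 x5 + ne x3 x4 x5))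
  -(nw (up x1 x2 x3) x5 x4 + up x1 (nw x2 x3 x5) x4 + up x1 x2 (nw x3 x5 x4 + up x3 x5 x4 + ne x3 x5 x4))
  -(nw (up x1 x2 x4) x3 x5 + up x1 (nw x2 x4 x3) x5 + up x1 x2 (nw x4 x3 x5 + up x4 x3 x5 + ne x4 x3 x5))
  + (nw (up x1 x2 x4) x5 x3 + up x1 (nw x2 x4 x5) x3 + up x1 x2 (nw x4 x5 x3 + up x4 x5 x3 + ne x4 x5 x3))
  + (nw (up x1 x2 x5) x3 x4 + up x1 (nw x2 x5 x3) x4 + up x1 x2 (nw x5 x3 x4 + up x5 x3 x4 + ne x5 x3 x4))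
  -(nw (up x1 x2 x5) x4 x3 + up x1 (nw x2 x5 x4) x3 + up x1 x2 (nw x5 x4 x3 + up x5 x4 x3 + ne x5 x4 x3))
  -(nw (up x1 x3 x2) x4 x5 + up x1 (nw x3 x2 x4) x5 + up x1 x3 (nw x2 x4 x5 + up x2 x4 x5 + ne x2 x4 x5))
  + (nw (up x1 x3 x2) x5 x4 + up x1 (nw x3 x2 x5) x4 + up x1 x3 (nw x2 x5 x4 + up x2 x5 x4 + ne x2 x5 x4))
  + (nw (up x1 x3 x4) x2 x5 + up x1 (nw x3 x4 x2) x5 + up x1 x3 (nw x4 x2 x5 + up x4 x2 x5 + ne x4 x2 x5))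
  -(nw (up x1 x3 x4) x5 x2 + up x1 (nw x3 x4 x5) x2 + up x1 x3 (nw x4 x5 x2 + up x4 x5 x2 + ne x4 x5 x2))
  -(nw (up x1 x3 x5) x2 x4 + up x1 (nw x3 x5 x2) x4 + up x1 x3 (nw x5 x2 x4 + up x5 x2 x4 + ne x5 x2 x4))
  + (nw (up x1 x3 x5) x4 x2 + up x1 (nw x3 x5 x4) x2 + up x1 x3 (nw x5 x4 x2 + up x5 x4 x2 + ne x5 x4 x2))
  + (nw (up x1 x4 x2) x3 x5 + up x1 (nw x4 x2 x3) x5 + up x1 x4 (nw x2 x3 x5 + up x2 x3 x5 + ne x2 x3 x5))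
  -(nw (up x1 x4 x2) x5 x3 + up x1 (nw x4 x2 x5) x3 + up x1 x4 (nw x2 x5 x3 + up x2 x5 x3 + ne x2 x5 x3))
  -(nw (up x1 x4 x3) x2 x5 + up x1 (nw x4 x3 x2) x5 + up x1 x4 (nw x3 x2 x5 + up x3 x2 x5 + ne x3 x2 x5))
  + (nw (up x1 x4 x3) x5 x2 + up x1 (nw x4 x3 x5) x2 + up x1 x4 (nw x3 x5 x2 + up x3 x5 x2 + ne x3 x5 x2))
  + (nw (up x1 x4 x5) x2 x3 + up x1 (nw x4 x5 x2) x3 + up x1 x4 (nw x5 x2 x3 + up x5 x2 x3 + ne x5 x2 x3))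
  -(nw (up x1 x4 x5) x3 x2 + up x1 (nw x4 x5 x3) x2 + up x1 x4 (nw x5 x3 x2 + up x5 x3 x2 + ne x5 x3 x2))
  -(nw (up x1 x5 x2) x3 x4 + up x1 (nw x5 x2 x3) x4 + up x1 x5 (nw x2 x3 x4 + up x2 x3 x4 + ne x2 x3 x4))
  + (nw (up x1 x5 x2) x4 x3 + up x1 (nw x5 x2 x4) x3 + up x1 x5 (nw x2 x4 x3 + up x2 x4 x3 + ne x2 x4 x3))
  + (nw (up x1 x5 x3) x2 x4 + up x1 (nw x5 x3 x2) x4 + up x1 x5 (nw x3 x2 x4 + up x3 x2 x4 + ne x3 x2 x4))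
  -(nw (up x1 x5 x3) x4 x2 + up x1 (nw x5 x3 x4) x2 + up x1 x5 (nw x3 x4 x2 + up x3 x4 x2 + ne x3 x4 x2))
  -(nw (up x1 x5 x4) x2 x3 + up x1 (nw x5 x4 x2) x3 + up x1 x5 (nw x4 x2 x3 + up x4 x2 x3 + ne x4 x2 x3))
  + (nw (up x1 x5 x4) x3 x2 + up x1 (nw x5 x4 x3) x2 + up x1 x5 (nw x4 x3 x2 + up x4 x3 x2 + ne x4 x3 x2))
  + (nw (ne x1 x2 x3) x4 x5 + up x1 (up x2 x3 x4) x5 + ne x1 x2 (nw x3 x4 x5))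
  -(nw (ne x1 x2 x3) x5 x4 + up x1 (up x2 x3 x5) x4 + ne x1 x2 (nw x3 x5 x4))
  -(nw (ne x1 x2 x4) x3 x5 + up x1 (up x2 x4 x3) x5 + ne x1 x2 (nw x4 x3 x5))
  + (nw (ne x1 x2 x4) x5 x3 + up x1 (up x2 x4 x5) x3 + ne x1 x2 (nw x4 x5 x3))
  + (nw (ne x1 x2 x5) x3 x4 + up x1 (up x2 x5 x3) x4 + ne x1 x2 (nw x5 x3 x4))
  -(nw (ne x1 x2 x5) x4 x3 + up x1 (up x2 x5 x4) x3 + ne x1 x2 (nw x5 x4 x3))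
  -(nw (ne x1 x3 x2) x4 x5 + up x1 (up x3 x2 x4) x5 + ne x1 x3 (nw x2 x4 x5))
  + (nw (ne x1 x3 x2) x5 x4 + up x1 (up x3 x2 x5) x4 + ne x1 x3 (nw x2 x5 x4))
  + (nw (ne x1 x3 x4) x2 x5 + up x1 (up x3 x4 x2) x5 + ne x1 x3 (nw x4 x2 x5))
  -(nw (ne x1 x3 x4) x5 x2 + up x1 (up x3 x4 x5) x2 + ne x1 x3 (nw x4 x5 x2))
  -(nw (ne x1 x3 x5) x2 x4 + up x1 (up x3 x5 x2) x4 + ne x1 x3 (nw x5 x2 x4))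
  + (nw (ne x1 x3 x5) x4 x2 + up x1 (up x3 x5 x4) x2 + ne x1 x3 (nw x5 x4 x2))
  + (nw (ne x1 x4 x2) x3 x5 + up x1 (up x4 x2 x3) x5 + ne x1 x4 (nw x2 x3 x5))
  -(nw (ne x1 x4 x2) x5 x3 + up x1 (up x4 x2 x5) x3 + ne x1 x4 (nw x2 x5 x3))
  -(nw (ne x1 x4 x3) x2 x5 + up x1 (up x4 x3 x2) x5 + ne x1 x4 (nw x3 x2 x5))
  + (nw (ne x1 x4 x3) x5 x2 + up x1 (up x4 x3 x5) x2 + ne x1 x4 (nw x3 x5 x2))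
  + (nw (ne x1 x4 x5) x2 x3 + up x1 (up x4 x5 x2) x3 + ne x1 x4 (nw x5 x2 x3))
  -(nw (ne x1 x4 x5) x3 x2 + up x1 (up x4 x5 x3) x2 + ne x1 x4 (nw x5 x3 x2))
  -(nw (ne x1 x5 x2) x3 x4 + up x1 (up x5 x2 x3) x4 + ne x1 x5 (nw x2 x3 x4))
  + (nw (ne x1 x5 x2) x4 x3 + up x1 (up x5 x2 x4) x3 + ne x1 x5 (nw x2 x4 x3))
  + (nw (ne x1 x5 x3) x2 x4 + up x1 (up x5 x3 x2) x4 + ne x1 x5 (nw x3 x2 x4))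
  -(nw (ne x1 x5 x3) x4 x2 + up x1 (up x5 x3 x4) x2 + ne x1 x5 (nw x3 x4 x2))
  -(nw (ne x1 x5 x4) x2 x3 + up x1 (up x5 x4 x2) x3 + ne x1 x5 (nw x4 x2 x3))
  + (nw (ne x1 x5 x4) x3 x2 + up x1 (up x5 x4 x3) x2 + ne x1 x5 (nw x4 x3 x2))
  + (up (nw x1 x2 x3 + up x1 x2 x3 + ne x1 x2 x3) x4 x5 + up x1 (ne x2 x3 x4) x5 + ne x1 x2 (up x3 x4 x5))
  -(up (nw x1 x2 x3 + up x1 x2 x3 + ne x1 x2 x3) x5 x4 + up x1 (ne x2 x3 x5) x4 + ne x1 x2 (up x3 x5 x4))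
  -(up (nw x1 x2 x4 + up x1 x2 x4 + ne x1 x2 x4) x3 x5 + up x1 (ne x2 x4 x3) x5 + ne x1 x2 (up x4 x3 x5))
  + (up (nw x1 x2 x4 + up x1 x2 x4 + ne x1 x2 x4) x5 x3 + up x1 (ne x2 x4 x5) x3 + ne x1 x2 (up x4 x5 x3))
  + (up (nw x1 x2 x5 + up x1 x2 x5 + ne x1 x2 x5) x3 x4 + up x1 (ne x2 x5 x3) x4 + ne x1 x2 (up x5 x3 x4))
  -(up (nw x1 x2 x5 + up x1 x2 x5 + ne x1 x2 x5) x4 x3 + up x1 (ne x2 x5 x4) x3 + ne x1 x2 (up x5 x4 x3))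
  -(up (nw x1 x3 x2 + up x1 x3 x2 + ne x1 x3 x2) x4 x5 + up x1 (ne x3 x2 x4) x5 + ne x1 x3 (up x2 x4 x5))
  + (up (nw x1 x3 x2 + up x1 x3 x2 + ne x1 x3 x2) x5 x4 + up x1 (ne x3 x2 x5) x4 + ne x1 x3 (up x2 x5 x4))
  + (up (nw x1 x3 x4 + up x1 x3 x4 + ne x1 x3 x4) x2 x5 + up x1 (ne x3 x4 x2) x5 + ne x1 x3 (up x4 x2 x5))
  -(up (nw x1 x3 x4 + up x1 x3 x4 + ne x1 x3 x4) x5 x2 + up x1 (ne x3 x4 x5) x2 + ne x1 x3 (up x4 x5 x2))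
  -(up (nw x1 x3 x5 + up x1 x3 x5 + ne x1 x3 x5) x2 x4 + up x1 (ne x3 x5 x2) x4 + ne x1 x3 (up x5 x2 x4))
  + (up (nw x1 x3 x5 + up x1 x3 x5 + ne x1 x3 x5) x4 x2 + up x1 (ne x3 x5 x4) x2 + ne x1 x3 (up x5 x4 x2))
  + (up (nw x1 x4 x2 + up x1 x4 x2 + ne x1 x4 x2) x3 x5 + up x1 (ne x4 x2 x3) x5 + ne x1 x4 (up x2 x3 x5))
  -(up (nw x1 x4 x2 + up x1 x4 x2 + ne x1 x4 x2) x5 x3 + up x1 (ne x4 x2 x5) x3 + ne x1 x4 (up x2 x5 x3))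
  -(up (nw x1 x4 x3 + up x1 x4 x3 + ne x1 x4 x3) x2 x5 + up x1 (ne x4 x3 x2) x5 + ne x1 x4 (up x3 x2 x5))
  + (up (nw x1 x4 x3 + up x1 x4 x3 + ne x1 x4 x3) x5 x2 + up x1 (ne x4 x3 x5) x2 + ne x1 x4 (up x3 x5 x2))
  + (up (nw x1 x4 x5 + up x1 x4 x5 + ne x1 x4 x5) x2 x3 + up x1 (ne x4 x5 x2) x3 + ne x1 x4 (up x5 x2 x3))
  -(up (nw x1 x4 x5 + up x1 x4 x5 + ne x1 x4 x5) x3 x2 + up x1 (ne x4 x5 x3) x2 + ne x1 x4 (up x5 x3 x2))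
  -(up (nw x1 x5 x2 + up x1 x5 x2 + ne x1 x5 x2) x3 x4 + up x1 (ne x5 x2 x3) x4 + ne x1 x5 (up x2 x3 x4))
  + (up (nw x1 x5 x2 + up x1 x5 x2 + ne x1 x5 x2) x4 x3 + up x1 (ne x5 x2 x4) x3 + ne x1 x5 (up x2 x4 x3))
  + (up (nw x1 x5 x3 + up x1 x5 x3 + ne x1 x5 x3) x2 x4 + up x1 (ne x5 x3 x2) x4 + ne x1 x5 (up x3 x2 x4))
  -(up (nw x1 x5 x3 + up x1 x5 x3 + ne x1 x5 x3) x4 x2 + up x1 (ne x5 x3 x4) x2 + ne x1 x5 (up x3 x4 x2))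
  -(up (nw x1 x5 x4 + up x1 x5 x4 + ne x1 x5 x4) x2 x3 + up x1 (ne x5 x4 x2) x3 + ne x1 x5 (up x4 x2 x3))
  + (up (nw x1 x5 x4 + up x1 x5 x4 + ne x1 x5 x4) x3 x2 + up x1 (ne x5 x4 x3) x2 + ne x1 x5 (up x4 x3 x2))
  + (ne (nw x1 x2 x3 + up x1 x2 x3 + ne x1 x2 x3) x4 x5 + ne x1 (nw x2 x3 x4 + up x2 x3 x4 + ne x2 x3 x4) x5 + ne x1 x2 (ne x3 x4 x5))
  -(ne (nw x1 x2 x3 + up x1 x2 x3 + ne x1 x2 x3) x5 x4 + ne x1 (nw x2 x3 x5 + up x2 x3 x5 + ne x2 x3 x5) x4 + ne x1 x2 (ne x3 x5 x4))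
  -(ne (nw x1 x2 x4 + up x1 x2 x4 + ne x1 x2 x4) x3 x5 + ne x1 (nw x2 x4 x3 + up x2 x4 x3 + ne x2 x4 x3) x5 + ne x1 x2 (ne x4 x3 x5))
  + (ne (nw x1 x2 x4 + up x1 x2 x4 + ne x1 x2 x4) x5 x3 + ne x1 (nw x2 x4 x5 + up x2 x4 x5 + ne x2 x4 x5) x3 + ne x1 x2 (ne x4 x5 x3))
  + (ne (nw x1 x2 x5 + up x1 x2 x5 + ne x1 x2 x5) x3 x4 + ne x1 (nw x2 x5 x3 + up x2 x5 x3 + ne x2 x5 x3) x4 + ne x1 x2 (ne x5 x3 x4))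
  -(ne (nw x1 x2 x5 + up x1 x2 x5 + ne x1 x2 x5) x4 x3 + ne x1 (nw x2 x5 x4 + up x2 x5 x4 + ne x2 x5 x4) x3 + ne x1 x2 (ne x5 x4 x3))
  -(ne (nw x1 x3 x2 + up x1 x3 x2 + ne x1 x3 x2) x4 x5 + ne x1 (nw x3 x2 x4 + up x3 x2 x4 + ne x3 x2 x4) x5 + ne x1 x3 (ne x2 x4 x5))
  + (ne (nw x1 x3 x2 + up x1 x3 x2 + ne x1 x3 x2) x5 x4 + ne x1 (nw x3 x2 x5 + up x3 x2 x5 + ne x3 x2 x5) x4 + ne x1 x3 (ne x2 x5 x4))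
  + (ne (nw x1 x3 x4 + up x1 x3 x4 + ne x1 x3 x4) x2 x5 + ne x1 (nw x3 x4 x2 + up x3 x4 x2 + ne x3 x4 x2) x5 + ne x1 x3 (ne x4 x2 x5))
  -(ne (nw x1 x3 x4 + up x1 x3 x4 + ne x1 x3 x4) x5 x2 + ne x1 (nw x3 x4 x5 + up x3 x4 x5 + ne x3 x4 x5) x2 + ne x1 x3 (ne x4 x5 x2))
  -(ne (nw x1 x3 x5 + up x1 x3 x5 + ne x1 x3 x5) x2 x4 + ne x1 (nw x3 x5 x2 + up x3 x5 x2 + ne x3 x5 x2) x4 + ne x1 x3 (ne x5 x2 x4))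
  + (ne (nw x1 x3 x5 + up x1 x3 x5 + ne x1 x3 x5) x4 x2 + ne x1 (nw x3 x5 x4 + up x3 x5 x4 + ne x3 x5 x4) x2 + ne x1 x3 (ne x5 x4 x2))
  + (ne (nw x1 x4 x2 + up x1 x4 x2 + ne x1 x4 x2) x3 x5 + ne x1 (nw x4 x2 x3 + up x4 x2 x3 + ne x4 x2 x3) x5 + ne x1 x4 (ne x2 x3 x5))
  -(ne (nw x1 x4 x2 + up x1 x4 x2 + ne x1 x4 x2) x5 x3 + ne x1 (nw x4 x2 x5 + up x4 x2 x5 + ne x4 x2 x5) x3 + ne x1 x4 (ne x2 x5 x3))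
  -(ne (nw x1 x4 x3 + up x1 x4 x3 + ne x1 x4 x3) x2 x5 + ne x1 (nw x4 x3 x2 + up x4 x3 x2 + ne x4 x3 x2) x5 + ne x1 x4 (ne x3 x2 x5))
  + (ne (nw x1 x4 x3 + up x1 x4 x3 + ne x1 x4 x3) x5 x2 + ne x1 (nw x4 x3 x5 + up x4 x3 x5 + ne x4 x3 x5) x2 + ne x1 x4 (ne x3 x5 x2))
  + (ne (nw x1 x4 x5 + up x1 x4 x5 + ne x1 x4 x5) x2 x3 + ne x1 (nw x4 x5 x2 + up x4 x5 x2 + ne x4 x5 x2) x3 + ne x1 x4 (ne x5 x2 x3))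
  -(ne (nw x1 x4 x5 + up x1 x4 x5 + ne x1 x4 x5) x3 x2 + ne x1 (nw x4 x5 x3 + up x4 x5 x3 + ne x4 x5 x3) x2 + ne x1 x4 (ne x5 x3 x2))
  -(ne (nw x1 x5 x2 + up x1 x5 x2 + ne x1 x5 x2) x3 x4 + ne x1 (nw x5 x2 x3 + up x5 x2 x3 + ne x5 x2 x3) x4 + ne x1 x5 (ne x2 x3 x4))
  + (ne (nw x1 x5 x2 + up x1 x5 x2 + ne x1 x5 x2) x4 x3 + ne x1 (nw x5 x2 x4 + up x5 x2 x4 + ne x5 x2 x4) x3 + ne x1 x5 (ne x2 x4 x3))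
  + (ne (nw x1 x5 x3 + up x1 x5 x3 + ne x1 x5 x3) x2 x4 + ne x1 (nw x5 x3 x2 + up x5 x3 x2 + ne x5 x3 x2) x4 + ne x1 x5 (ne x3 x2 x4))
  -(ne (nw x1 x5 x3 + up x1 x5 x3 + ne x1 x5 x3) x4 x2 + ne x1 (nw x5 x3 x4 + up x5 x3 x4 + ne x5 x3 x4) x2 + ne x1 x5 (ne x3 x4 x2))
  -(ne (nw x1 x5 x4 + up x1 x5 x4 + ne x1 x5 x4) x2 x3 + ne x1 (nw x5 x4 x2 + up x5 x4 x2 + ne x5 x4 x2) x3 + ne x1 x5 (ne x4 x2 x3))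
  + (ne (nw x1 x5 x4 + up x1 x5 x4 + ne x1 x5 x4) x3 x2 + ne x1 (nw x5 x4 x3 + up x5 x4 x3 + ne x5 x4 x3) x2 + ne x1 x5 (ne x4 x3 x2))
      ) = (0 : A) := by
      simp only [H1, H2, H3, H4, H5]
      simp
    rw [← sub_eq_zero, ← comb]
    simp only [star3, cyc3, map_add, map_sub, map_neg, LinearMap.add_apply,
      LinearMap.sub_apply, LinearMap.neg_apply]
    abel
  · intro x y z
    simp only [comm3]
    rw [sum_perm_fin3_aux]
    simp only [star3, cyc3]
    abel
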